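/- arXiv:1508.03789 — 2 statements merged into one kernel-verified Lean document; each statement's English description precedes it below -/
import Mathlib

section
/- Let G = diag(g₁,g₂,g₃) with distinct positive entries, Ψ(R,R_d) = (1/2) tr(G(I − R_dᵀR)), and e_R = (1/2)(G R_dᵀ R − Rᵀ R_d G)^∨. Then for any R, R_d ∈ SO(3) and η ∈ ℝ³, the directional derivative satisfies (d/dε)|_{ε=0} Ψ(R exp(ε η̂), R_d) = e_R · η. -/
open Matrix

noncomputable section

/-- The hat map `ℝ³ → 𝔰𝔬(3)`, with `hat x *ᵥ y = x × y`. -/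
def hat (x : Fin 3 → ℝ) : Matrix (Fin 3) (Fin 3) ℝ :=
  !![0, -x 2, x 1; x 2, 0, -x 0; -x 1, x 0, 0]

/-- The vee map, inverse of the hat map on skew-symmetric matrices. -/
def vee (A : Matrix (Fin 3) (Fin 3) ℝ) : Fin 3 → ℝ :=
  ![A 2 1, A 0 2, A 1 0]

/-- Membership in the special orthogonal group SO(3). -/
def SO3 (R : Matrix (Fin 3) (Fin 3) ℝ) : Prop :=
  Rᵀ * R = 1 ∧ R.det = 1

/-- Euclidean norm on `ℝ³` (and `ℝ²`). -/
def norm3 (x : Fin 3 → ℝ) : ℝ := Real.sqrt (x ⬝ᵥ x)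

def norm2v (x : Fin 2 → ℝ) : ℝ := Real.sqrt (x ⬝ᵥ x)

/-- Attitude error function `Ψ(R,R_d) = (1/2) tr (G (I - R_dᵀ R))`. -/
def Psi (G R Rd : Matrix (Fin 3) (Fin 3) ℝ) : ℝ :=
  (1 / 2) * (G * (1 - Rdᵀ * R)).trace

/-- Attitude error vector `e_R = (1/2) (G R_dᵀ R - Rᵀ R_d G)^∨`. -/
def eR (G R Rd : Matrix (Fin 3) (Fin 3) ℝ) : Fin 3 → ℝ :=
  (1 / 2 : ℝ) • vee (G * Rdᵀ * R - Rᵀ * Rd * G)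

/-- Third standard basis vector of `ℝ³`. -/
def e3 : Fin 3 → ℝ := ![0, 0, 1]

/-! With `M = G R_dᵀ R`, `Ψ(R exp(ε η̂), R_d) = ½ tr G - ½ tr (M exp(ε η̂))`, so the derivative at
`ε = 0` is `-½ tr (M η̂)`. The trace against a skew matrix only sees the skew part of `M`:
`tr (M η̂) = -(M - Mᵀ)^∨ ⋅ η`, and for symmetric `G` we have `Mᵀ = Rᵀ R_d G`. -/

section

variable {n : Type*} [Fintype n] [DecidableEq n]

attribute [local instance] Matrix.linftyOpNormedRing Matrix.linftyOpNormedAlgebra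

theorem Matrix.hasDerivAt_trace_mul_exp_smul (M A : Matrix n n ℝ) :
    HasDerivAt (fun ε : ℝ => (M * NormedSpace.exp (ε • A)).trace) (M * A).trace 0 := by
  have hexp : HasDerivAt (fun ε : ℝ => NormedSpace.exp (ε • A)) A 0 := by
    have := hasDerivAt_exp_smul_const (𝕂 := ℝ) A 0
    rwa [zero_smul, NormedSpace.exp_zero, one_mul] at this
  exact (traceLinearMap n ℝ ℝ ∘ₗ LinearMap.mulLeft ℝ M).toContinuousLinearMap.hasFDerivAt
    |>.comp_hasDerivAt 0 hexp

end

theorem psi_mul_right (G R Rd X : Matrix (Fin 3) (Fin 3) ℝ) :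
    Psi G (R * X) Rd = (1 / 2) * G.trace - (1 / 2) * (G * Rdᵀ * R * X).trace := by
  rw [Psi, Matrix.mul_sub, Matrix.mul_one, trace_sub, ← Matrix.mul_assoc, ← Matrix.mul_assoc]
  ring

theorem hasDerivAt_psi_mul_exp_smul (G R Rd A : Matrix (Fin 3) (Fin 3) ℝ) :
    HasDerivAt (fun ε : ℝ => Psi G (R * NormedSpace.exp (ε • A)) Rd)
      (-((1 / 2) * (G * Rdᵀ * R * A).trace)) 0 := by
  simp_rw [psi_mul_right]
  exact ((hasDerivAt_trace_mul_exp_smul (G * Rdᵀ * R) A).const_mul (1 / 2)).const_sub _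

theorem trace_mul_hat (M : Matrix (Fin 3) (Fin 3) ℝ) (η : Fin 3 → ℝ) :
    (M * hat η).trace = -(vee (M - Mᵀ) ⬝ᵥ η) := by
  simp only [hat, vee, trace_fin_three, mul_apply, of_apply, cons_val', cons_val_zero,
    cons_val_fin_one, cons_val_one, cons_val, Fin.sum_univ_three, dotProduct, Matrix.sub_apply,
    transpose_apply, mul_zero, mul_neg, zero_add, add_zero, neg_add_rev]
  ring

theorem eR_eq_half_smul_vee_sub_transpose {G : Matrix (Fin 3) (Fin 3) ℝ} (hG : Gᵀ = G)
    (R Rd : Matrix (Fin 3) (Fin 3) ℝ) :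
    eR G R Rd = (1 / 2 : ℝ) • vee (G * Rdᵀ * R - (G * Rdᵀ * R)ᵀ) := by
  rw [eR, transpose_mul, transpose_mul, transpose_transpose, hG, Matrix.mul_assoc Rᵀ]

theorem psi_directional_derivative_general (g : Fin 3 → ℝ)
    (R Rd : Matrix (Fin 3) (Fin 3) ℝ) (η : Fin 3 → ℝ) :
    deriv (fun ε : ℝ => Psi (diagonal g) (R * NormedSpace.exp (ε • hat η)) Rd) 0
      = eR (diagonal g) R Rd ⬝ᵥ η := by
  rw [(hasDerivAt_psi_mul_exp_smul _ R Rd (hat η)).deriv, trace_mul_hat,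
    eR_eq_half_smul_vee_sub_transpose (diagonal_transpose g), smul_dotProduct, smul_eq_mul]
  ring

/-- directional derivative of `Ψ` along `δR = R η̂` equals `e_R ⋅ η`. -/
theorem psi_directional_derivative (g : Fin 3 → ℝ) (hpos : ∀ i, 0 < g i)
    (hdist : Function.Injective g)
    (R Rd : Matrix (Fin 3) (Fin 3) ℝ) (hR : SO3 R) (hRd : SO3 Rd) (η : Fin 3 → ℝ) :
    deriv (fun ε : ℝ => Psi (diagonal g) (R * NormedSpace.exp (ε • hat η)) Rd) 0
      = eR (diagonal g) R Rd ⬝ᵥ η :=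
  psi_directional_derivative_general g R Rd η
end
end

section
/- Let G = diag(g₁,g₂,g₃), gᵢ > 0 distinct, and let ψ be a positive constant with ψ < h₁ = min{g₁+g₂, g₂+g₃, g₃+g₁}. Define h₄ = max{g₁+g₂, g₂+g₃, g₃+g₁}, h₅ = min{(g₁+g₂)², (g₂+g₃)², (g₃+g₁)²}, and b₂ = h₁h₄/(h₅(h₁−ψ)). Then for all R, R_d ∈ SO(3) with Ψ(R,R_d) < ψ, one has Ψ(R,R_d) ≤ b₂ ‖e_R‖². -/
/-!
Put `Q = R_dᵀ R ∈ SO(3)` and write `Q` through a unit quaternion `(q₀, q)`. Then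
`Ψ = Σᵢ (gⱼ + gₖ) qᵢ²`, so `h₁ (1 - q₀²) ≤ Ψ ≤ h₄ (1 - q₀²)`, while
`‖e_R‖² ≥ h₅ q₀² (1 - q₀²)` because the cross terms of `‖e_R‖²` cancel. Now `Ψ < ψ` forces
`q₀² > 1 - ψ / h₁`, and dividing the two estimates gives the bound. Everything is phrased through
`1 + tr Q = 4 q₀²` and `1 + 2 Qᵢᵢ - tr Q = 4 qᵢ²`, whose consequences are polynomial identities
in the entries of `Q`, so no quaternion has to be constructed.
-/

open Matrix

noncomputable section

theorem Psi_eq_Psi_one (G R Rd : Matrix (Fin 3) (Fin 3) ℝ) : Psi G R Rd = Psi G (Rdᵀ * R) 1 := by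
  simp [Psi]

theorem eR_eq_eR_one (G R Rd : Matrix (Fin 3) (Fin 3) ℝ) : eR G R Rd = eR G (Rdᵀ * R) 1 := by
  simp [eR, Matrix.mul_assoc, Matrix.transpose_mul]

theorem four_mul_Psi_diagonal_one (g : Fin 3 → ℝ) (Q : Matrix (Fin 3) (Fin 3) ℝ) :
    4 * Psi (diagonal g) Q 1 =
      (g 1 + g 2) * (1 + Q 0 0 - Q 1 1 - Q 2 2) + (g 2 + g 0) * (1 + Q 1 1 - Q 2 2 - Q 0 0) +
        (g 0 + g 1) * (1 + Q 2 2 - Q 0 0 - Q 1 1) := by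
  simp only [Psi, one_div, transpose_one, one_mul, trace_fin_three, Fin.isValue, Matrix.mul_apply,
    Matrix.sub_apply, Matrix.one_apply, Fin.sum_univ_three, diagonal_apply_eq, ↓reduceIte, ne_eq,
    zero_ne_one, not_false_eq_true, diagonal_apply_ne, one_ne_zero, zero_sub, mul_neg, zero_mul,
    neg_zero, add_zero, Fin.reduceEq, zero_add]
  ring

theorem sixteen_mul_norm3_eR_diagonal_one_sq (g : Fin 3 → ℝ) (Q : Matrix (Fin 3) (Fin 3) ℝ) :
    16 * norm3 (eR (diagonal g) Q 1) ^ 2 =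
      ((g 1 + g 2) * (Q 2 1 - Q 1 2) + (g 2 - g 1) * (Q 2 1 + Q 1 2)) ^ 2 +
        ((g 2 + g 0) * (Q 0 2 - Q 2 0) + (g 0 - g 2) * (Q 0 2 + Q 2 0)) ^ 2 +
          ((g 0 + g 1) * (Q 1 0 - Q 0 1) + (g 1 - g 0) * (Q 1 0 + Q 0 1)) ^ 2 := by
  rw [norm3, Real.sq_sqrt (by simpa using dotProduct_self_star_nonneg (eR (diagonal g) Q 1))]
  simp only [dotProduct, eR, one_div, vee, diagonal, transpose_one, mul_one, Fin.isValue,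
    Matrix.sub_apply, Matrix.mul_apply, of_apply, ite_mul, zero_mul, Finset.sum_ite_eq,
    Finset.mem_univ, ↓reduceIte, transpose_apply, mul_ite, mul_zero, Finset.sum_ite_eq',
    Pi.smul_apply, smul_eq_mul, Fin.sum_univ_three, cons_val_zero, cons_val_one, cons_val]
  ring

namespace SO3

theorem transpose_mul {A B : Matrix (Fin 3) (Fin 3) ℝ} (hA : SO3 A) (hB : SO3 B) :
    SO3 (Aᵀ * B) := by
  refine ⟨?_, by simp [hA.2, hB.2]⟩
  calc (Aᵀ * B)ᵀ * (Aᵀ * B) = Bᵀ * (A * Aᵀ) * B := by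
        simp only [Matrix.transpose_mul, Matrix.transpose_transpose, Matrix.mul_assoc]
    _ = 1 := by rw [mul_eq_one_comm.mp hA.1, Matrix.mul_one, hB.1]

variable {Q : Matrix (Fin 3) (Fin 3) ℝ}

theorem row_sq_sum (hQ : SO3 Q) (i : Fin 3) : Q i 0 ^ 2 + Q i 1 ^ 2 + Q i 2 ^ 2 = 1 := by
  have h : Q * Qᵀ = 1 := mul_eq_one_comm.mp hQ.1
  simpa [Matrix.mul_apply, Fin.sum_univ_three, sq] using congrFun (congrFun h i) i

theorem col_sq_sum (hQ : SO3 Q) (j : Fin 3) : Q 0 j ^ 2 + Q 1 j ^ 2 + Q 2 j ^ 2 = 1 := by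
  simpa [Matrix.mul_apply, Fin.sum_univ_three, sq] using congrFun (congrFun hQ.1 j) j

theorem adjugate_eq_transpose (hQ : SO3 Q) : Q.adjugate = Qᵀ :=
  calc Q.adjugate = Qᵀ * Q * Q.adjugate := by rw [hQ.1, Matrix.one_mul]
    _ = Qᵀ := by rw [Matrix.mul_assoc, Matrix.mul_adjugate, hQ.2, one_smul, Matrix.mul_one]

theorem diag_eq_cofactor (hQ : SO3 Q) :
    Q 0 0 = Q 1 1 * Q 2 2 - Q 1 2 * Q 2 1 ∧ Q 1 1 = Q 0 0 * Q 2 2 - Q 0 2 * Q 2 0 ∧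
      Q 2 2 = Q 0 0 * Q 1 1 - Q 0 1 * Q 1 0 := by
  have h (i : Fin 3) := congrFun (congrFun hQ.adjugate_eq_transpose i) i
  have h₀ := h 0
  have h₁ := h 1
  have h₂ := h 2
  simp only [Fin.isValue, adjugate_fin_three, of_apply, cons_val', cons_val, cons_val_zero,
    cons_val_one, cons_val_fin_one, transpose_apply] at h₀ h₁ h₂
  exact ⟨by linarith, by linarith, by linarith⟩

theorem abs_apply_le_one (hQ : SO3 Q) (i j : Fin 3) : |Q i j| ≤ 1 := by
  simpa using entry_norm_bound_of_unitary (Matrix.mem_orthogonalGroup_iff' (Fin 3) ℝ |>.2 hQ.1) i j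

theorem trace_le_three (hQ : SO3 Q) : Q.trace ≤ 3 := by
  rw [Matrix.trace_fin_three]
  linarith [(abs_le.1 (hQ.abs_apply_le_one 0 0)).2, (abs_le.1 (hQ.abs_apply_le_one 1 1)).2,
    (abs_le.1 (hQ.abs_apply_le_one 2 2)).2]

-- The squared form of `Q₂₁ - Q₁₂ = 4 q₀ q₁` for a unit quaternion `(q₀, q)` of `Q`.
theorem skew_sq_eq (hQ : SO3 Q) :
    (Q 2 1 - Q 1 2) ^ 2 = (1 + Q 0 0 - Q 1 1 - Q 2 2) * (1 + Q.trace) ∧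
      (Q 0 2 - Q 2 0) ^ 2 = (1 + Q 1 1 - Q 2 2 - Q 0 0) * (1 + Q.trace) ∧
        (Q 1 0 - Q 0 1) ^ 2 = (1 + Q 2 2 - Q 0 0 - Q 1 1) * (1 + Q.trace) := by
  obtain ⟨h₀, h₁, h₂⟩ := hQ.diag_eq_cofactor
  rw [Matrix.trace_fin_three]
  refine ⟨?_, ?_, ?_⟩
  · linear_combination hQ.row_sq_sum 1 + hQ.row_sq_sum 2 - hQ.col_sq_sum 0 - 2 * h₀
  · linear_combination hQ.row_sq_sum 0 + hQ.row_sq_sum 2 - hQ.col_sq_sum 1 - 2 * h₁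
  · linear_combination hQ.row_sq_sum 0 + hQ.row_sq_sum 1 - hQ.col_sq_sum 2 - 2 * h₂

theorem skew_mul_symm_eq (hQ : SO3 Q) :
    (Q 2 1 - Q 1 2) * (Q 2 1 + Q 1 2) = (Q 0 2 - Q 2 0) * (Q 0 2 + Q 2 0) ∧
      (Q 2 1 - Q 1 2) * (Q 2 1 + Q 1 2) = (Q 1 0 - Q 0 1) * (Q 1 0 + Q 0 1) :=
  ⟨by linear_combination hQ.row_sq_sum 2 - hQ.col_sq_sum 2,
    by linear_combination hQ.col_sq_sum 1 - hQ.row_sq_sum 1⟩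

theorem one_add_trace_nonneg (hQ : SO3 Q) : 0 ≤ 1 + Q.trace := by
  by_contra! hneg
  obtain ⟨h₀, h₁, h₂⟩ := hQ.skew_sq_eq
  have w₀ := nonpos_of_mul_nonneg_left (h₀ ▸ sq_nonneg _) hneg
  have w₁ := nonpos_of_mul_nonneg_left (h₁ ▸ sq_nonneg _) hneg
  have w₂ := nonpos_of_mul_nonneg_left (h₂ ▸ sq_nonneg _) hneg
  rw [Matrix.trace_fin_three] at hneg
  linarith

theorem one_add_diag_sub_nonneg (hQ : SO3 Q) :
    0 ≤ 1 + Q 0 0 - Q 1 1 - Q 2 2 ∧ 0 ≤ 1 + Q 1 1 - Q 2 2 - Q 0 0 ∧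
      0 ≤ 1 + Q 2 2 - Q 0 0 - Q 1 1 := by
  obtain ⟨h₀, h₁, h₂⟩ := hQ.skew_sq_eq
  rcases hQ.one_add_trace_nonneg.eq_or_lt with htr | htr
  · -- on `1 + tr Q = 0` each weight equals `2 (1 + Q i i)`
    rw [Matrix.trace_fin_three] at htr
    have := fun i => (abs_le.1 (hQ.abs_apply_le_one i i)).1
    exact ⟨by linarith [this 0], by linarith [this 1], by linarith [this 2]⟩
  · exact ⟨nonneg_of_mul_nonneg_left (h₀ ▸ sq_nonneg _) htr,
      nonneg_of_mul_nonneg_left (h₁ ▸ sq_nonneg _) htr,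
      nonneg_of_mul_nonneg_left (h₂ ▸ sq_nonneg _) htr⟩

end SO3

variable {g : Fin 3 → ℝ} {Q : Matrix (Fin 3) (Fin 3) ℝ}

theorem mul_three_sub_trace_le_four_mul_Psi (hQ : SO3 Q) {h₁ : ℝ} (h01 : h₁ ≤ g 0 + g 1)
    (h12 : h₁ ≤ g 1 + g 2) (h20 : h₁ ≤ g 2 + g 0) :
    h₁ * (3 - Q.trace) ≤ 4 * Psi (diagonal g) Q 1 := by
  obtain ⟨w₀, w₁, w₂⟩ := hQ.one_add_diag_sub_nonneg
  rw [four_mul_Psi_diagonal_one, Matrix.trace_fin_three]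
  linarith [mul_le_mul_of_nonneg_right h12 w₀, mul_le_mul_of_nonneg_right h20 w₁,
    mul_le_mul_of_nonneg_right h01 w₂]

theorem four_mul_Psi_le_mul_three_sub_trace (hQ : SO3 Q) {h₄ : ℝ} (h01 : g 0 + g 1 ≤ h₄)
    (h12 : g 1 + g 2 ≤ h₄) (h20 : g 2 + g 0 ≤ h₄) :
    4 * Psi (diagonal g) Q 1 ≤ h₄ * (3 - Q.trace) := by
  obtain ⟨w₀, w₁, w₂⟩ := hQ.one_add_diag_sub_nonneg
  rw [four_mul_Psi_diagonal_one, Matrix.trace_fin_three]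
  linarith [mul_le_mul_of_nonneg_right h12 w₀, mul_le_mul_of_nonneg_right h20 w₁,
    mul_le_mul_of_nonneg_right h01 w₂]

theorem mul_sum_sq_le_sum_sq_of_cross_eq_zero {c₀ c₁ c₂ d₀ d₁ d₂ a₀ a₁ a₂ s₀ s₁ s₂ h : ℝ}
    (h₀ : h ≤ c₀ ^ 2) (h₁ : h ≤ c₁ ^ 2) (h₂ : h ≤ c₂ ^ 2)
    (hcross : c₀ * d₀ * (a₀ * s₀) + c₁ * d₁ * (a₁ * s₁) + c₂ * d₂ * (a₂ * s₂) = 0) :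
    h * (a₀ ^ 2 + a₁ ^ 2 + a₂ ^ 2) ≤
      (c₀ * a₀ + d₀ * s₀) ^ 2 + (c₁ * a₁ + d₁ * s₁) ^ 2 + (c₂ * a₂ + d₂ * s₂) ^ 2 := by
  nlinarith [sq_nonneg (d₀ * s₀), sq_nonneg (d₁ * s₁), sq_nonneg (d₂ * s₂),
    mul_le_mul_of_nonneg_right h₀ (sq_nonneg a₀), mul_le_mul_of_nonneg_right h₁ (sq_nonneg a₁),
    mul_le_mul_of_nonneg_right h₂ (sq_nonneg a₂)]

theorem mul_one_add_trace_mul_le_sixteen_mul_norm3_eR_sq (hQ : SO3 Q) {h₅ : ℝ}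
    (h01 : h₅ ≤ (g 0 + g 1) ^ 2) (h12 : h₅ ≤ (g 1 + g 2) ^ 2) (h20 : h₅ ≤ (g 2 + g 0) ^ 2) :
    h₅ * ((1 + Q.trace) * (3 - Q.trace)) ≤ 16 * norm3 (eR (diagonal g) Q 1) ^ 2 := by
  obtain ⟨s₀, s₁, s₂⟩ := hQ.skew_sq_eq
  obtain ⟨p₁, p₂⟩ := hQ.skew_mul_symm_eq
  have hskew : (Q 2 1 - Q 1 2) ^ 2 + (Q 0 2 - Q 2 0) ^ 2 + (Q 1 0 - Q 0 1) ^ 2 =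
      (1 + Q.trace) * (3 - Q.trace) := by
    rw [s₀, s₁, s₂, Matrix.trace_fin_three]; ring
  -- the products `(Q j k - Q k j) (Q j k + Q k j)` agree, so the cross terms telescope
  have hcross : (g 1 + g 2) * (g 2 - g 1) * ((Q 2 1 - Q 1 2) * (Q 2 1 + Q 1 2)) +
      (g 2 + g 0) * (g 0 - g 2) * ((Q 0 2 - Q 2 0) * (Q 0 2 + Q 2 0)) +
        (g 0 + g 1) * (g 1 - g 0) * ((Q 1 0 - Q 0 1) * (Q 1 0 + Q 0 1)) = 0 := by
    rw [← p₁, ← p₂]; ring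
  rw [sixteen_mul_norm3_eR_diagonal_one_sq, ← hskew]
  exact mul_sum_sq_le_sum_sq_of_cross_eq_zero h12 h20 h01 hcross

theorem le_div_mul_of_bounds {P N x h₁ h₄ h₅ ψ : ℝ} (hh₁ : 0 < h₁) (hh₄ : 0 ≤ h₄) (hh₅ : 0 < h₅)
    (hψ : ψ < h₁) (hx : 0 ≤ x) (hlow : h₁ * x ≤ 4 * P) (hup : 4 * P ≤ h₄ * x)
    (hN : h₅ * ((4 - x) * x) ≤ 16 * N) (hP : P < ψ) :
    P ≤ h₁ * h₄ / (h₅ * (h₁ - ψ)) * N := by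
  have hψx : 4 * (h₁ - ψ) ≤ h₁ * (4 - x) := by linarith
  rw [div_mul_eq_mul_div, le_div_iff₀ (mul_pos hh₅ (by linarith))]
  calc P * (h₅ * (h₁ - ψ)) ≤ h₄ * x / 4 * (h₅ * (h₁ - ψ)) := by gcongr; linarith
    _ = h₄ * x * h₅ * (4 * (h₁ - ψ)) / 16 := by ring
    _ ≤ h₄ * x * h₅ * (h₁ * (4 - x)) / 16 := by gcongr
    _ = h₁ * h₄ * (h₅ * ((4 - x) * x)) / 16 := by ring
    _ ≤ h₁ * h₄ * N := by nlinarith [mul_le_mul_of_nonneg_left hN (mul_nonneg hh₁.le hh₄)]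

theorem psi_upper_bound_general (g : Fin 3 → ℝ) (hpos : ∀ i, 0 < g i)
    (ψ h₁ h₄ h₅ b₂ : ℝ)
    (hh₁ : h₁ = min (g 0 + g 1) (min (g 1 + g 2) (g 2 + g 0)))
    (hh₄ : h₄ = max (g 0 + g 1) (max (g 1 + g 2) (g 2 + g 0)))
    (hh₅ : h₅ = min ((g 0 + g 1) ^ 2) (min ((g 1 + g 2) ^ 2) ((g 2 + g 0) ^ 2)))
    (hb₂ : b₂ = h₁ * h₄ / (h₅ * (h₁ - ψ)))
    (hψ : ψ < h₁)
    (R Rd : Matrix (Fin 3) (Fin 3) ℝ) (hR : SO3 R) (hRd : SO3 Rd)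
    (hΨ : Psi (diagonal g) R Rd < ψ) :
    Psi (diagonal g) R Rd ≤ b₂ * norm3 (eR (diagonal g) R Rd) ^ 2 := by
  have hQ : SO3 (Rdᵀ * R) := hRd.transpose_mul hR
  rw [Psi_eq_Psi_one] at hΨ ⊢
  rw [eR_eq_eR_one]
  set Q := Rdᵀ * R
  have h01 := add_pos (hpos 0) (hpos 1)
  have h12 := add_pos (hpos 1) (hpos 2)
  have h20 := add_pos (hpos 2) (hpos 0)
  have hh₁pos : 0 < h₁ := hh₁ ▸ lt_min h01 (lt_min h12 h20)
  have hh₄pos : 0 ≤ h₄ := hh₄ ▸ le_max_of_le_left h01.le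
  have hh₅pos : 0 < h₅ := hh₅ ▸ lt_min (by positivity) (lt_min (by positivity) (by positivity))
  have hlow : h₁ * (3 - Q.trace) ≤ 4 * Psi (diagonal g) Q 1 :=
    mul_three_sub_trace_le_four_mul_Psi hQ (by simp [hh₁]) (by simp [hh₁]) (by simp [hh₁])
  have hup : 4 * Psi (diagonal g) Q 1 ≤ h₄ * (3 - Q.trace) :=
    four_mul_Psi_le_mul_three_sub_trace hQ (by simp [hh₄]) (by simp [hh₄]) (by simp [hh₄])
  have herr : h₅ * ((1 + Q.trace) * (3 - Q.trace)) ≤ 16 * norm3 (eR (diagonal g) Q 1) ^ 2 :=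
    mul_one_add_trace_mul_le_sixteen_mul_norm3_eR_sq hQ
      (by simp [hh₅]) (by simp [hh₅]) (by simp [hh₅])
  rw [hb₂]
  refine le_div_mul_of_bounds hh₁pos hh₄pos hh₅pos hψ (by linarith [hQ.trace_le_three])
    hlow hup (by linarith) hΨ

/-- upper bound `Ψ(R,R_d) ≤ b₂ ‖e_R‖²` when `Ψ(R,R_d) < ψ < h₁`. -/
theorem psi_upper_bound (g : Fin 3 → ℝ) (hpos : ∀ i, 0 < g i)
    (hdist : Function.Injective g)
    (ψ h₁ h₄ h₅ b₂ : ℝ)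
    (hh₁ : h₁ = min (g 0 + g 1) (min (g 1 + g 2) (g 2 + g 0)))
    (hh₄ : h₄ = max (g 0 + g 1) (max (g 1 + g 2) (g 2 + g 0)))
    (hh₅ : h₅ = min ((g 0 + g 1) ^ 2) (min ((g 1 + g 2) ^ 2) ((g 2 + g 0) ^ 2)))
    (hb₂ : b₂ = h₁ * h₄ / (h₅ * (h₁ - ψ)))
    (hψpos : 0 < ψ) (hψ : ψ < h₁)
    (R Rd : Matrix (Fin 3) (Fin 3) ℝ) (hR : SO3 R) (hRd : SO3 Rd)
    (hΨ : Psi (diagonal g) R Rd < ψ) :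
    Psi (diagonal g) R Rd ≤ b₂ * norm3 (eR (diagonal g) R Rd) ^ 2 :=
  psi_upper_bound_general g hpos ψ h₁ h₄ h₅ b₂ hh₁ hh₄ hh₅ hb₂ hψ R Rd hR hRd hΨ
end
end
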